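/- arXiv:2207.02891 — 4 statements merged into one kernel-verified Lean document; each statement's English description precedes it below -/
import Mathlib

section
/- For every 1 ≤ n ≤ N, the deviation of the augmented point from the original point is controlled by the increments of the original sequence: ‖x_{n,λ} − x_n‖ ≤ Σ_{k=1}^{n} (∏_{i=k}^{n} λ_i) · ‖x_k − x_{k−1}‖. -/
open Finset

noncomputable def interp {E : Type*} [NormedAddCommGroup E] [NormedSpace ℝ E]
    (x : ℕ → E) (lam : ℕ → ℝ) : ℕ → E
  | 0 => x 0
  | n + 1 => (1 - lam (n + 1)) • x (n + 1) + lam (n + 1) • interp x lam n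

/-!
The deviation `d n = x_{n,λ} - x_n` satisfies `d (n+1) = λ_{n+1} • (d n + (x_n - x_{n+1}))`,
so `‖d (n+1)‖ ≤ λ_{n+1} (‖d n‖ + ‖x_{n+1} - x_n‖)` as long as `λ_{n+1} ≥ 0`.
Unrolling this linear recursive inequality from `d 0 = 0` gives the bound.
-/

theorem sum_Icc_prod_Icc_mul_succ {R : Type*} [CommSemiring R] (c b : ℕ → R) (n : ℕ) :
    ∑ k ∈ Icc 1 (n + 1), (∏ i ∈ Icc k (n + 1), c i) * b k =
      c (n + 1) * (∑ k ∈ Icc 1 n, (∏ i ∈ Icc k n, c i) * b k + b (n + 1)) := by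
  rw [sum_Icc_succ_top (by omega), Icc_self, prod_singleton, mul_add, mul_sum]
  congr 1
  refine sum_congr rfl fun k hk => ?_
  rw [prod_Icc_succ_top (by simp at hk; omega)]
  ring

theorem le_sum_prod_mul_of_le_mul_add {R : Type*} [CommSemiring R] [PartialOrder R]
    [IsOrderedRing R] {a b c : ℕ → R} (n : ℕ) (ha : a 0 ≤ 0)
    (hc : ∀ m < n, 0 ≤ c (m + 1)) (hrec : ∀ m < n, a (m + 1) ≤ c (m + 1) * (a m + b (m + 1))) :
    a n ≤ ∑ k ∈ Icc 1 n, (∏ i ∈ Icc k n, c i) * b k := by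
  induction n with
  | zero => simpa using ha
  | succ n ih =>
    have ih := ih (fun m hm => hc m (by omega)) (fun m hm => hrec m (by omega))
    calc a (n + 1) ≤ c (n + 1) * (a n + b (n + 1)) := hrec n n.lt_succ_self
      _ ≤ c (n + 1) * (∑ k ∈ Icc 1 n, (∏ i ∈ Icc k n, c i) * b k + b (n + 1)) := by
        gcongr
        exact hc n n.lt_succ_self
      _ = _ := (sum_Icc_prod_Icc_mul_succ c b n).symm

section Interp

variable {E : Type*} [NormedAddCommGroup E] [NormedSpace ℝ E] (x : ℕ → E) (lam : ℕ → ℝ)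

theorem interp_zero_sub : interp x lam 0 - x 0 = 0 :=
  sub_self _

theorem interp_succ_sub (n : ℕ) :
    interp x lam (n + 1) - x (n + 1) =
      lam (n + 1) • (interp x lam n - x n + (x n - x (n + 1))) := by
  simp only [interp]
  module

theorem norm_interp_succ_sub_le {n : ℕ} (hlam : 0 ≤ lam (n + 1)) :
    ‖interp x lam (n + 1) - x (n + 1)‖ ≤
      lam (n + 1) * (‖interp x lam n - x n‖ + ‖x (n + 1) - x n‖) := by
  rw [interp_succ_sub, norm_smul, Real.norm_of_nonneg hlam, norm_sub_rev (x (n + 1))]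
  gcongr
  exact norm_add_le _ _

end Interp

theorem interp_deviation_le_increments_general {E : Type*} [NormedAddCommGroup E] [NormedSpace ℝ E]
    (N : ℕ) (x : ℕ → E) (lam : ℕ → ℝ)
    (hlam : ∀ i, 1 ≤ i → i ≤ N → lam i ∈ Set.Ico (0 : ℝ) 1)
    (n : ℕ) (hn : n ≤ N) :
    ‖interp x lam n - x n‖ ≤
      ∑ k ∈ Finset.Icc 1 n, (∏ i ∈ Finset.Icc k n, lam i) * ‖x k - x (k - 1)‖ := by
  have hnonneg : ∀ m < n, 0 ≤ lam (m + 1) := fun m hm => (hlam (m + 1) (by omega) (by omega)).1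
  refine le_sum_prod_mul_of_le_mul_add (a := fun m => ‖interp x lam m - x m‖)
    (b := fun k => ‖x k - x (k - 1)‖) n (by simp [interp_zero_sub]) hnonneg fun m hm => ?_
  simpa using norm_interp_succ_sub_le x lam (hnonneg m hm)

/-- The deviation of the augmented point from the original point is controlled
by the increments of the original sequence:
`‖x_{n,λ} − x_n‖ ≤ Σ_{k=1}^{n} (∏_{i=k}^{n} λ_i) · ‖x_k − x_{k−1}‖`. -/
theorem interp_deviation_le_increments {E : Type*} [NormedAddCommGroup E] [NormedSpace ℝ E]
    (N : ℕ) (x : ℕ → E) (lam : ℕ → ℝ)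
    (hlam : ∀ i, 1 ≤ i → i ≤ N → lam i ∈ Set.Ico (0 : ℝ) 1)
    (n : ℕ) (hn1 : 1 ≤ n) (hn : n ≤ N) :
    ‖interp x lam n - x n‖ ≤
      ∑ k ∈ Finset.Icc 1 n, (∏ i ∈ Finset.Icc k n, lam i) * ‖x k - x (k - 1)‖ :=
  interp_deviation_le_increments_general N x lam hlam n hn
end

section
/- Suppose λ_1, …, λ_N are independent integrable random variables with values in [0,1) and common mean e = E[λ_i], with e < 1. Then for every 1 ≤ n ≤ N, the expected deviation satisfies ‖E[x_{n,λ} − x_n]‖ ≤ min{ (e/(1−e))·m′, n·e·m′ }, where m′ = max_{1 ≤ i ≤ n} ‖x_i − x_{i−1}‖. -/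
/-! Unrolling the recursion gives `x_{n,λ} - x_n = ∑_{k=1}^n (∏_{i=k}^n λ_i) • (x_{k-1} - x_k)`.
By independence each product has expectation `e^{n+1-k}`, so the expected deviation is bounded
by `m' · ∑_{j=1}^n e^j`, and this geometric sum is at most both `e/(1-e)` and `n·e`. -/

open Finset MeasureTheory ProbabilityTheory

namespace ProbabilityTheory

variable {Ω ι : Type*} {mΩ : MeasurableSpace Ω} {μ : Measure Ω} {f : ι → Ω → ℝ}

theorem iIndepFun.integrable_finsetProd (hf : iIndepFun f μ) (hint : ∀ i, Integrable (f i) μ)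
    (s : Finset ι) : Integrable (fun ω => ∏ i ∈ s, f i ω) μ := by
  classical
  have := hf.isProbabilityMeasure
  induction s using Finset.induction_on with
  | empty => simp
  | insert a s ha ih =>
    have hindep := hf.indepFun_finsetProd_of_notMem₀ (fun i => (hint i).aemeasurable) ha
    convert hindep.integrable_mul (by rwa [prod_fn]) (hint a) using 1
    ext ω
    simp [prod_insert ha, mul_comm]

theorem iIndepFun.integral_finsetProd (hf : iIndepFun f μ)
    (hm : ∀ i, AEStronglyMeasurable (f i) μ) (s : Finset ι) :
    ∫ ω, ∏ i ∈ s, f i ω ∂μ = ∏ i ∈ s, ∫ ω, f i ω ∂μ := by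
  simp_rw [← prod_coe_sort s]
  exact (hf.precomp Subtype.val_injective).integral_fun_prod_eq_prod_integral fun i => hm i

end ProbabilityTheory

theorem norm_sum_smul_le_sum_mul {ι E : Type*} [SeminormedAddCommGroup E] [NormedSpace ℝ E]
    {s : Finset ι} {c : ι → ℝ} {v : ι → E} {m : ℝ} (hc : ∀ i ∈ s, 0 ≤ c i)
    (hv : ∀ i ∈ s, ‖v i‖ ≤ m) : ‖∑ i ∈ s, c i • v i‖ ≤ (∑ i ∈ s, c i) * m := by
  rw [sum_mul]
  refine norm_sum_le_of_le s fun i hi => ?_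
  rw [norm_smul, Real.norm_of_nonneg (hc i hi)]
  exact mul_le_mul_of_nonneg_left (hv i hi) (hc i hi)

theorem sum_Icc_pow_sub_le_div {e : ℝ} (he0 : 0 ≤ e) (he : e < 1) (n : ℕ) :
    ∑ k ∈ Icc 1 n, e ^ (n + 1 - k) ≤ e / (1 - e) := by
  rw [← Ico_add_one_right_eq_Icc, sum_Ico_reflect (fun j => e ^ j) 1 (Nat.le_succ (n + 1))]
  simpa using geom_sum_Ico_le_of_lt_one (m := 1) (n := n + 1) he0 he

theorem sum_Icc_pow_sub_le_mul {e : ℝ} (he0 : 0 ≤ e) (he : e ≤ 1) (n : ℕ) :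
    ∑ k ∈ Icc 1 n, e ^ (n + 1 - k) ≤ n * e :=
  calc ∑ k ∈ Icc 1 n, e ^ (n + 1 - k)
      ≤ ∑ _k ∈ Icc 1 n, e := sum_le_sum fun k hk =>
        pow_le_of_le_one he0 he (by simp only [mem_Icc] at hk; omega)
    _ = n * e := by simp

section Interp

variable {E : Type*} [NormedAddCommGroup E] [NormedSpace ℝ E]

theorem interp_sub_eq_sum (x : ℕ → E) (lam : ℕ → ℝ) (n : ℕ) :
    interp x lam n - x n
      = ∑ k ∈ Icc 1 n, (∏ i ∈ Icc k n, lam i) • (x (k - 1) - x k) := by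
  induction n with
  | zero => simp [interp]
  | succ n ih =>
    have hstep : interp x lam (n + 1) - x (n + 1)
        = lam (n + 1) • ((interp x lam n - x n) + (x n - x (n + 1))) := by
      simp only [interp]
      module
    rw [hstep, ih, sum_Icc_succ_top (by omega), smul_add, smul_sum, Icc_self, prod_singleton,
      Nat.add_sub_cancel]
    congr 1
    refine sum_congr rfl fun k hk => ?_
    rw [prod_Icc_succ_top (by simp only [mem_Icc] at hk; omega), mul_comm, mul_smul]

theorem integral_interp_sub_eq_sum [CompleteSpace E] {Ω : Type*} [MeasurableSpace Ω]
    {μ : Measure Ω} (x : ℕ → E) {lam : ℕ → Ω → ℝ} (hint : ∀ i, Integrable (lam i) μ)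
    (hindep : iIndepFun lam μ) {e : ℝ} {n : ℕ} (hmean : ∀ i ∈ Icc 1 n, ∫ ω, lam i ω ∂μ = e) :
    ∫ ω, interp x (fun i => lam i ω) n - x n ∂μ
      = ∑ k ∈ Icc 1 n, e ^ (n + 1 - k) • (x (k - 1) - x k) := by
  simp_rw [interp_sub_eq_sum]
  rw [integral_finsetSum _ fun k _ => (hindep.integrable_finsetProd hint _).smul_const _]
  refine sum_congr rfl fun k hk => ?_
  rw [integral_smul_const, hindep.integral_finsetProd fun i => (hint i).aestronglyMeasurable,
    prod_congr rfl fun i hi => hmean i (by simp only [mem_Icc] at hk hi ⊢; omega), prod_const,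
    Nat.card_Icc]

end Interp

theorem interp_expected_deviation_le_increments_general
    {E : Type*} [NormedAddCommGroup E] [NormedSpace ℝ E] [FiniteDimensional ℝ E]
    {Ω : Type*} [MeasureSpace Ω]
    (N : ℕ) (x : ℕ → E) (lam : ℕ → Ω → ℝ)
    (hint : ∀ i, Integrable (lam i))
    (hval : ∀ i ω, 1 ≤ i → i ≤ N → lam i ω ∈ Set.Ico (0 : ℝ) 1)
    (hindep : iIndepFun lam ℙ)
    (e : ℝ) (he : e < 1) (hmean : ∀ i, 1 ≤ i → i ≤ N → (∫ ω, lam i ω) = e)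
    (n : ℕ) (hn1 : 1 ≤ n) (hn : n ≤ N) :
    ‖∫ ω, (interp x (fun i => lam i ω) n - x n)‖ ≤
      min ((e / (1 - e)) *
            ((Finset.Icc 1 n).sup' (Finset.nonempty_Icc.mpr hn1) fun i => ‖x i - x (i - 1)‖))
          ((n : ℝ) * e *
            ((Finset.Icc 1 n).sup' (Finset.nonempty_Icc.mpr hn1) fun i => ‖x i - x (i - 1)‖)) := by
  set m := (Icc 1 n).sup' (nonempty_Icc.mpr hn1) fun i => ‖x i - x (i - 1)‖
  have he0 : 0 ≤ e := hmean 1 le_rfl (hn1.trans hn) ▸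
    integral_nonneg fun ω => (hval 1 ω le_rfl (hn1.trans hn)).1
  have hincr : ∀ k ∈ Icc 1 n, ‖x (k - 1) - x k‖ ≤ m := fun k hk =>
    norm_sub_rev (x k) _ ▸ le_sup' (fun i => ‖x i - x (i - 1)‖) hk
  have hm0 : 0 ≤ m := (norm_nonneg _).trans (hincr n (right_mem_Icc.mpr hn1))
  have hdev : ‖∫ ω, (interp x (fun i => lam i ω) n - x n)‖
      ≤ (∑ k ∈ Icc 1 n, e ^ (n + 1 - k)) * m := by
    rw [integral_interp_sub_eq_sum x hint hindep fun i hi =>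
      hmean i (mem_Icc.mp hi).1 ((mem_Icc.mp hi).2.trans hn)]
    exact norm_sum_smul_le_sum_mul (fun _ _ => pow_nonneg he0 _) hincr
  exact le_min (hdev.trans (mul_le_mul_of_nonneg_right (sum_Icc_pow_sub_le_div he0 he n) hm0))
    (hdev.trans (mul_le_mul_of_nonneg_right (sum_Icc_pow_sub_le_mul he0 he.le n) hm0))

/-- If the interpolation coefficients are independent, integrable, `[0,1)`-valued
random variables with common mean `e < 1`, then the expected deviation satisfies
`‖E[x_{n,λ} − x_n]‖ ≤ min{ (e/(1−e))·m′, n·e·m′ }` with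
`m′ = max_{1 ≤ i ≤ n} ‖x i − x (i−1)‖`. -/
theorem interp_expected_deviation_le_increments
    {E : Type*} [NormedAddCommGroup E] [NormedSpace ℝ E] [FiniteDimensional ℝ E]
    [MeasurableSpace E] [BorelSpace E]
    {Ω : Type*} [MeasureSpace Ω] [IsProbabilityMeasure (ℙ : Measure Ω)]
    (N : ℕ) (x : ℕ → E) (lam : ℕ → Ω → ℝ)
    (hmeas : ∀ i, Measurable (lam i))
    (hint : ∀ i, Integrable (lam i))
    (hval : ∀ i ω, 1 ≤ i → i ≤ N → lam i ω ∈ Set.Ico (0 : ℝ) 1)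
    (hindep : iIndepFun lam ℙ)
    (e : ℝ) (he : e < 1) (hmean : ∀ i, 1 ≤ i → i ≤ N → (∫ ω, lam i ω) = e)
    (n : ℕ) (hn1 : 1 ≤ n) (hn : n ≤ N) :
    ‖∫ ω, (interp x (fun i => lam i ω) n - x n)‖ ≤
      min ((e / (1 - e)) *
            ((Finset.Icc 1 n).sup' (Finset.nonempty_Icc.mpr hn1) fun i => ‖x i - x (i - 1)‖))
          ((n : ℝ) * e *
            ((Finset.Icc 1 n).sup' (Finset.nonempty_Icc.mpr hn1) fun i => ‖x i - x (i - 1)‖)) :=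
  interp_expected_deviation_le_increments_general N x lam hint hval hindep e he hmean n hn1 hn
end

section
/- Assume l takes values in [0,1], Θ is nonempty, and l is L-Lipschitz in its first argument uniformly in θ: |l(s,θ) − l(s′,θ)| ≤ L·‖s − s′‖ for all s, s′, θ. Fix samples s_0, …, s_N ∈ S and define the empirical Rademacher complexity of a family f : S × Θ → ℝ as ℛ_N(f) := E_ε[ sup_{θ∈Θ} | (1/(N+1)) Σ_{i=0}^{N} ε_i · f(s_i, θ) | ], where ε = (ε_0,…,ε_N) is uniformly distributed on {−1, +1}^{N+1}. Then the Rademacher complexity of the averaged augmented loss l_aug(s,θ) := ∫_Λ l(a(s,μ),θ) d𝒟(μ) satisfies ℛ_N(l_aug) ≤ ℛ_N(l) + max_{0 ≤ i ≤ N} L · ∫_Λ ‖a(s_i,μ) − s_i‖ d𝒟(μ). -/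
/-!
Averaging over augmentations moves each loss value `l(s_i, θ)` by at most
`L · ∫ ‖a(s_i, μ) - s_i‖ dμ`, by the Lipschitz bound under the integral. A signed mean of
the `N + 1` values therefore moves by at most the largest of these shifts, uniformly in `θ`
and in the sign vector, and this shift passes through the supremum over `θ` (finite since
`l` is bounded) and the average over sign vectors.
-/

open MeasureTheory Finset

theorem abs_integral_comp_sub_le {S Λ : Type*} [NormedAddCommGroup S] [MeasurableSpace Λ]
    {D : Measure Λ} [IsProbabilityMeasure D] {f : S → ℝ} {L : ℝ}
    (hf : ∀ x y, |f x - f y| ≤ L * ‖x - y‖) {g : Λ → S} {x : S}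
    (hfg : Integrable (fun μ => f (g μ)) D) (hg : Integrable (fun μ => ‖g μ - x‖) D) :
    |∫ μ, f (g μ) ∂D - f x| ≤ L * ∫ μ, ‖g μ - x‖ ∂D :=
  calc |∫ μ, f (g μ) ∂D - f x| = |∫ μ, (f (g μ) - f x) ∂D| := by
        rw [integral_sub hfg (integrable_const _), integral_const, probReal_univ, one_smul]
    _ ≤ ∫ μ, |f (g μ) - f x| ∂D := abs_integral_le_integral_abs
    _ ≤ ∫ μ, L * ‖g μ - x‖ ∂D :=
        integral_mono (hfg.sub (integrable_const _)).abs (hg.const_mul L) fun μ => hf _ _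
    _ = L * ∫ μ, ‖g μ - x‖ ∂D := integral_const_mul L _

noncomputable def signedMean {n : ℕ} (ε : Fin (n + 1) → Bool) (x : Fin (n + 1) → ℝ) : ℝ :=
  (1 / (n + 1 : ℝ)) * ∑ i, (if ε i then (1 : ℝ) else -1) * x i

theorem signedMean_sub {n : ℕ} (ε : Fin (n + 1) → Bool) (x y : Fin (n + 1) → ℝ) :
    signedMean ε x - signedMean ε y = signedMean ε (x - y) := by
  simp only [signedMean, ← mul_sub, ← sum_sub_distrib, Pi.sub_apply]

theorem abs_signedMean_le {n : ℕ} (ε : Fin (n + 1) → Bool) {x : Fin (n + 1) → ℝ} {B : ℝ}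
    (hx : ∀ i, |x i| ≤ B) : |signedMean ε x| ≤ B := by
  have hsign : ∀ i, |(if ε i then (1 : ℝ) else -1) * x i| ≤ B := fun i => by
    rw [abs_mul]; split_ifs <;> simpa using hx i
  calc |signedMean ε x|
      = (1 / (n + 1 : ℝ)) * |∑ i, (if ε i then (1 : ℝ) else -1) * x i| := by
        rw [signedMean, abs_mul, abs_of_nonneg (by positivity)]
    _ ≤ (1 / (n + 1 : ℝ)) * ∑ _i : Fin (n + 1), B := by
        gcongr
        exact (abs_sum_le_sum_abs _ _).trans (sum_le_sum fun i _ => hsign i)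
    _ = B := by simp [field]

theorem ciSup_le_ciSup_add {ι : Type*} [Nonempty ι] {f g : ι → ℝ} {c : ℝ}
    (hg : BddAbove (Set.range g)) (h : ∀ i, f i ≤ g i + c) : ⨆ i, f i ≤ (⨆ i, g i) + c :=
  ciSup_le fun i => (h i).trans (add_le_add_left (le_ciSup hg i) c)

theorem sum_div_card_le_sum_div_card_add {α : Type*} [Fintype α] [Nonempty α]
    {f g : α → ℝ} {c : ℝ} (h : ∀ a, f a ≤ g a + c) :
    (∑ a, f a) / Fintype.card α ≤ (∑ a, g a) / Fintype.card α + c := by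
  have hcard : (0 : ℝ) < Fintype.card α := by exact_mod_cast Fintype.card_pos
  rw [div_add' _ _ _ hcard.ne', div_le_div_iff_of_pos_right hcard]
  calc ∑ a, f a ≤ ∑ a, (g a + c) := sum_le_sum fun a _ => h a
    _ = ∑ a, g a + c * Fintype.card α := by
        rw [sum_add_distrib, sum_const, card_univ, nsmul_eq_mul, mul_comm]

/-- The empirical Rademacher complexity of the averaged augmented loss is bounded by
that of the original loss plus the maximal expected augmentation distance (times the
Lipschitz constant `L`). -/
theorem rademacher_aug_le
    {S : Type*} [NormedAddCommGroup S]
    {Λ : Type*} [MeasurableSpace Λ]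
    (D : Measure Λ) [IsProbabilityMeasure D]
    {Θ : Type*} [Nonempty Θ]
    (a : S → Λ → S)
    (l : S → Θ → ℝ)
    (hl01 : ∀ s θ, l s θ ∈ Set.Icc (0 : ℝ) 1)
    (L : ℝ)
    (hLip : ∀ s s' θ, |l s θ - l s' θ| ≤ L * ‖s - s'‖)
    (N : ℕ) (s : Fin (N + 1) → S)
    (hint1 : ∀ s' θ, Integrable (fun μ => l (a s' μ) θ) D)
    (hint2 : ∀ s', Integrable (fun μ => ‖a s' μ - s'‖) D)
    -- the averaged augmented loss
    (laug : S → Θ → ℝ) (hlaug : ∀ s' θ, laug s' θ = ∫ μ, l (a s' μ) θ ∂D)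
    -- the empirical Rademacher complexity, the expectation being the average over
    -- all sign vectors ε ∈ {−1,+1}^{N+1}
    (Rad : (S → Θ → ℝ) → ℝ)
    (hRad : ∀ f : S → Θ → ℝ, Rad f =
      (∑ ε : Fin (N + 1) → Bool,
        ⨆ θ : Θ, |(1 / (N + 1 : ℝ)) * ∑ i, (if ε i then (1 : ℝ) else -1) * f (s i) θ|)
        / 2 ^ (N + 1)) :
    Rad laug ≤ Rad l +
      Finset.univ.sup' Finset.univ_nonempty
        (fun i => L * ∫ μ, ‖a (s i) μ - s i‖ ∂D) := by
  set M := Finset.univ.sup' Finset.univ_nonempty fun i => L * ∫ μ, ‖a (s i) μ - s i‖ ∂D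
  have hshift : ∀ i θ, |laug (s i) θ - l (s i) θ| ≤ M := fun i θ => by
    rw [hlaug]
    exact (abs_integral_comp_sub_le (fun x y => hLip x y θ) (hint1 _ θ) (hint2 _)).trans
      (le_sup' (fun i => L * ∫ μ, ‖a (s i) μ - s i‖ ∂D) (mem_univ i))
  have hbdd : ∀ ε, BddAbove (Set.range fun θ => |signedMean ε fun i => l (s i) θ|) :=
    fun ε => ⟨1, Set.forall_mem_range.2 fun θ => abs_signedMean_le ε fun i =>
      abs_le.2 ⟨by linarith [(hl01 (s i) θ).1], (hl01 (s i) θ).2⟩⟩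
  have hmean : ∀ ε θ, |signedMean ε fun i => laug (s i) θ|
      ≤ |signedMean ε fun i => l (s i) θ| + M := fun ε θ => by
    have := abs_signedMean_le ε (hshift · θ)
    rw [← Pi.sub_def, ← signedMean_sub] at this
    linarith [abs_sub_abs_le_abs_sub (signedMean ε fun i => laug (s i) θ)
      (signedMean ε fun i => l (s i) θ)]
  have hcard : (Fintype.card (Fin (N + 1) → Bool) : ℝ) = 2 ^ (N + 1) := by simp
  rw [hRad, hRad, ← hcard]
  exact sum_div_card_le_sum_div_card_add fun ε =>
    ciSup_le_ciSup_add (hbdd ε) (hmean ε)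
end

section
/- Fix λ ∈ [0,1)^d, indices 1 ≤ j ≤ d and 0 ≤ i ≤ d, and consider the map t ↦ x_{i, λ[j:=t]} obtained by replacing the j-th interpolation coefficient by t. This map is differentiable at t = λ_j, and its derivative equals: 0 if i < j; x_{j−1,λ} − x_j if i = j; and (∏_{k=j+1}^{i} λ_k)·(x_{j−1,λ} − x_j) if i > j. -/
/-!
The point `x_{n,λ}` only involves `λ_1, …, λ_n`, so moving `λ_j` does not affect the points
before `j`, makes `x_{j,λ}` affine in `λ_j`, and then propagates through the later steps
`x_{n+1,λ} = (1 - λ_{n+1}) x_{n+1} + λ_{n+1} x_{n,λ}`, each of which scales the derivative by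
`λ_{n+1}`.
-/

open Finset

section

variable {E : Type*} [NormedAddCommGroup E] [NormedSpace ℝ E] (x : ℕ → E) (lam : ℕ → ℝ)

theorem interp_update_of_lt {j n : ℕ} (hn : n < j) (t : ℝ) :
    interp x (Function.update lam j t) n = interp x lam n := by
  induction n with
  | zero => rfl
  | succ m ih =>
    simp only [interp, Function.update_of_ne (by omega : m + 1 ≠ j), ih (by omega)]

theorem interp_update_succ_self (m : ℕ) (t : ℝ) :
    interp x (Function.update lam (m + 1) t) (m + 1) = (1 - t) • x (m + 1) + t • interp x lam m := by
  simp only [interp, Function.update_self, interp_update_of_lt x lam (Nat.lt_succ_self m)]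

theorem hasDerivAt_interp_update_self (j : ℕ) (t₀ : ℝ) :
    HasDerivAt (fun t => interp x (Function.update lam j t) j)
      (interp x lam (j - 1) - x j) t₀ := by
  cases j with
  | zero => simpa [interp] using hasDerivAt_const t₀ (x 0)
  | succ m =>
    simp only [interp_update_succ_self x lam m, Nat.add_sub_cancel]
    have h := (((hasDerivAt_id t₀).const_sub 1).smul_const (x (m + 1))).add
      ((hasDerivAt_id t₀).smul_const (interp x lam m))
    exact h.congr_deriv (by module)

theorem hasDerivAt_interp_update_of_le {j : ℕ} {t₀ : ℝ} {D : E}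
    (hD : HasDerivAt (fun t => interp x (Function.update lam j t) j) D t₀)
    {n : ℕ} (hjn : j ≤ n) :
    HasDerivAt (fun t => interp x (Function.update lam j t) n)
      ((∏ k ∈ Icc (j + 1) n, lam k) • D) t₀ := by
  induction n, hjn using Nat.le_induction with
  | base => simpa using hD
  | succ n hjn ih =>
    have hstep : (fun t => interp x (Function.update lam j t) (n + 1)) = fun t =>
        (1 - lam (n + 1)) • x (n + 1) + lam (n + 1) • interp x (Function.update lam j t) n := by
      funext t
      simp only [interp, Function.update_of_ne (by omega : n + 1 ≠ j)]
    rw [hstep, prod_Icc_succ_top (by omega : j + 1 ≤ n + 1), mul_comm, mul_smul]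
    exact (ih.const_smul (lam (n + 1))).const_add _

end

theorem interp_hasDerivAt_update_general {E : Type*} [NormedAddCommGroup E] [NormedSpace ℝ E]
    (x : ℕ → E) (lam : ℕ → ℝ)
    (j : ℕ)
    (i : ℕ) :
    HasDerivAt (fun t => interp x (Function.update lam j t) i)
      (if i < j then 0
       else if i = j then interp x lam (j - 1) - x j
       else (∏ k ∈ Finset.Icc (j + 1) i, lam k) • (interp x lam (j - 1) - x j))
      (lam j) := by
  rcases lt_trichotomy i j with hij | rfl | hji
  · rw [if_pos hij]
    simpa only [interp_update_of_lt x lam hij] using hasDerivAt_const (lam j) (interp x lam i)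
  · simpa using hasDerivAt_interp_update_self x lam i (lam i)
  · rw [if_neg (by omega), if_neg (by omega)]
    exact hasDerivAt_interp_update_of_le x lam (hasDerivAt_interp_update_self x lam j _) hji.le

/-- Structure of the partial derivative of the recursively interpolated point with
respect to the `j`-th interpolation coefficient: the map `t ↦ x_{i, λ[j:=t]}` is
differentiable at `t = λ_j` with derivative `0` if `i < j`, `x_{j−1,λ} − x_j` if
`i = j`, and `(∏_{k=j+1}^{i} λ_k)·(x_{j−1,λ} − x_j)` if `i > j`. -/
theorem interp_hasDerivAt_update {E : Type*} [NormedAddCommGroup E] [NormedSpace ℝ E]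
    (d : ℕ) (x : ℕ → E) (lam : ℕ → ℝ)
    (hlam : ∀ i, 1 ≤ i → i ≤ d → lam i ∈ Set.Ico (0 : ℝ) 1)
    (j : ℕ) (hj1 : 1 ≤ j) (hjd : j ≤ d)
    (i : ℕ) (hid : i ≤ d) :
    HasDerivAt (fun t => interp x (Function.update lam j t) i)
      (if i < j then 0
       else if i = j then interp x lam (j - 1) - x j
       else (∏ k ∈ Finset.Icc (j + 1) i, lam k) • (interp x lam (j - 1) - x j))
      (lam j) :=
  interp_hasDerivAt_update_general x lam j i
end
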